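/- arXiv:2212.12811 — 3 statements merged into one kernel-verified Lean document; each statement's English description precedes it below -/
import Mathlib

section
/- Let B ∈ M_m(ℝ) ⊗ M_n(ℝ) and define W^{1+i}(B) := { c ∈ ℝ : c(1+i) ∈ W(B + iB^Γ) }, where W denotes the numerical range over complex unit vectors. Then μ_max(B) ∈ W^{1+i}(B), i.e., μ_max(B) ≤ W^{1+i}_max(B), and similarly μ_min(B) ≥ W^{1+i}_min(B). -/
/-!
For a real product vector `x = v ⊗ w` the partial transpose leaves the quadratic form unchanged,
`xᵀ B^Γ x = xᵀ B x`, so `x* (B + i B^Γ) x = (1 + i) xᵀ B x`: every value of `B` on unit product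
vectors, in particular `μ_max` and `μ_min`, lies in `W^{1+i}(B)`. The set `W^{1+i}(B)` is bounded,
its elements being real parts of points of the compact numerical range, so its supremum and
infimum bound `μ_max` and `μ_min`.
-/

open Matrix Complex

noncomputable section

def vKron {α β : Type*} (v : α → ℝ) (w : β → ℝ) : α × β → ℝ := fun p => v p.1 * w p.2

def cKron {α β : Type*} (v : α → ℂ) (w : β → ℂ) : α × β → ℂ := fun p => v p.1 * w p.2

/-- Partial transpose on the second tensor factor. -/
def pt {α β : Type*} (B : Matrix (α × β) (α × β) ℝ) : Matrix (α × β) (α × β) ℝ :=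
  Matrix.of fun p q => B (p.1, q.2) (q.1, p.2)

/-- Values of the quadratic form of `B` on real unit product vectors. -/
def prodSet {α β : Type*} [Fintype α] [Fintype β] (B : Matrix (α × β) (α × β) ℝ) : Set ℝ :=
  {r | ∃ (v : α → ℝ) (w : β → ℝ), v ⬝ᵥ v = 1 ∧ w ⬝ᵥ w = 1 ∧
    r = vKron v w ⬝ᵥ B.mulVec (vKron v w)}

/-- The numerical range of a complex matrix. -/
def numRange {N : Type*} [Fintype N] (A : Matrix N N ℂ) : Set ℂ :=
  {z | ∃ x : N → ℂ, star x ⬝ᵥ x = 1 ∧ z = star x ⬝ᵥ A.mulVec x}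

/-- `W^{1+i}(B) = {c ∈ ℝ : c(1+i) ∈ W(B + iB^Γ)}`. -/
def W1i {α β : Type*} [Fintype α] [Fintype β] (B : Matrix (α × β) (α × β) ℝ) : Set ℝ :=
  {c | (c : ℂ) * (1 + Complex.I) ∈
    numRange (B.map (fun t => (t : ℂ)) + Complex.I • (pt B).map (fun t => (t : ℂ)))}

lemma vKron_dotProduct_vKron {α β : Type*} [Fintype α] [Fintype β] (v : α → ℝ) (w : β → ℝ) :
    vKron v w ⬝ᵥ vKron v w = (v ⬝ᵥ v) * (w ⬝ᵥ w) := by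
  simp only [dotProduct, vKron, Fintype.sum_prod_type, Finset.sum_mul, Finset.mul_sum]
  rw [Finset.sum_comm]
  exact Finset.sum_congr rfl fun _ _ => Finset.sum_congr rfl fun _ _ => by ring

lemma dotProduct_mulVec_eq_sum {ι : Type*} [Fintype ι] (M : Matrix ι ι ℝ) (u : ι → ℝ) :
    u ⬝ᵥ M *ᵥ u = ∑ x : ι × ι, u x.1 * M x.1 x.2 * u x.2 := by
  simp [Fintype.sum_prod_type, dotProduct, mulVec, Finset.mul_sum, mul_assoc]

lemma vKron_dotProduct_pt_mulVec_vKron {α β : Type*} [Fintype α] [Fintype β]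
    (B : Matrix (α × β) (α × β) ℝ) (v : α → ℝ) (w : β → ℝ) :
    vKron v w ⬝ᵥ pt B *ᵥ vKron v w = vKron v w ⬝ᵥ B *ᵥ vKron v w := by
  rw [dotProduct_mulVec_eq_sum, dotProduct_mulVec_eq_sum]
  -- swap the second-factor indices of the row and column
  let e : (α × β) × (α × β) ≃ (α × β) × (α × β) :=
    ⟨fun x => ((x.1.1, x.2.2), (x.2.1, x.1.2)), fun x => ((x.1.1, x.2.2), (x.2.1, x.1.2)),
      fun _ => rfl, fun _ => rfl⟩
  refine Fintype.sum_equiv e _ _ fun x => ?_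
  simp only [e, Equiv.coe_fn_mk, vKron, pt, of_apply]
  ring

lemma star_ofReal_dotProduct_map_mulVec {ι : Type*} [Fintype ι] (M : Matrix ι ι ℝ)
    (u : ι → ℝ) :
    star (fun i => (u i : ℂ)) ⬝ᵥ M.map (↑) *ᵥ (fun i => (u i : ℂ)) = ((u ⬝ᵥ M *ᵥ u : ℝ) : ℂ) := by
  simp only [dotProduct, mulVec, map_apply, Pi.star_apply, RCLike.star_def, conj_ofReal]
  push_cast
  rfl

lemma star_ofReal_dotProduct_ofReal {ι : Type*} [Fintype ι] (u : ι → ℝ) :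
    star (fun i => (u i : ℂ)) ⬝ᵥ (fun i => (u i : ℂ)) = ((u ⬝ᵥ u : ℝ) : ℂ) := by
  simp only [dotProduct, Pi.star_apply, RCLike.star_def, conj_ofReal]
  push_cast
  rfl

lemma prodSet_subset_W1i {α β : Type*} [Fintype α] [Fintype β]
    (B : Matrix (α × β) (α × β) ℝ) : prodSet B ⊆ W1i B := by
  rintro μ ⟨v, w, hv, hw, rfl⟩
  refine ⟨fun i => (vKron v w i : ℂ), ?_, ?_⟩
  · rw [star_ofReal_dotProduct_ofReal, vKron_dotProduct_vKron, hv, hw]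
    norm_num
  · rw [add_mulVec, dotProduct_add, smul_mulVec, dotProduct_smul,
      star_ofReal_dotProduct_map_mulVec, star_ofReal_dotProduct_map_mulVec,
      vKron_dotProduct_pt_mulVec_vKron, smul_eq_mul]
    ring

lemma star_dotProduct_self_eq_one_iff {N : Type*} [Fintype N] (x : N → ℂ) :
    star x ⬝ᵥ x = 1 ↔ ‖WithLp.toLp 2 x‖ = 1 := by
  have h : star x ⬝ᵥ x = ((‖WithLp.toLp 2 x‖ ^ 2 : ℝ) : ℂ) := by
    rw [dotProduct_comm, ← EuclideanSpace.inner_eq_star_dotProduct, inner_self_eq_norm_sq_to_K]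
    push_cast
    rfl
  rw [h, ofReal_eq_one, pow_eq_one_iff_of_nonneg (norm_nonneg _) two_ne_zero]

lemma isCompact_numRange {N : Type*} [Fintype N] (A : Matrix N N ℂ) :
    IsCompact (numRange A) := by
  have h : numRange A =
      (fun x : EuclideanSpace ℂ N => star x.ofLp ⬝ᵥ A *ᵥ x.ofLp) '' Metric.sphere 0 1 := by
    ext z
    constructor
    · rintro ⟨x, hx, rfl⟩
      exact ⟨WithLp.toLp 2 x, by simpa using (star_dotProduct_self_eq_one_iff x).1 hx, rfl⟩
    · rintro ⟨x, hx, rfl⟩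
      exact ⟨x.ofLp, (star_dotProduct_self_eq_one_iff x.ofLp).2 (by simpa using hx), rfl⟩
  rw [h]
  exact (isCompact_sphere 0 1).image (by fun_prop)

lemma W1i_subset_re_image_numRange {α β : Type*} [Fintype α] [Fintype β]
    (B : Matrix (α × β) (α × β) ℝ) :
    W1i B ⊆ re '' numRange (B.map (↑) + I • (pt B).map (↑)) :=
  fun c hc => ⟨_, hc, by simp⟩

lemma isBounded_W1i {α β : Type*} [Fintype α] [Fintype β] (B : Matrix (α × β) (α × β) ℝ) :
    Bornology.IsBounded (W1i B) :=
  ((isCompact_numRange _).image continuous_re).isBounded.subset (W1i_subset_re_image_numRange B)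

theorem stmt5 {m n : ℕ} (B : Matrix (Fin m × Fin n) (Fin m × Fin n) ℝ)
    (μmax μmin : ℝ) (hmax : IsGreatest (prodSet B) μmax) (hmin : IsLeast (prodSet B) μmin) :
    μmax ∈ W1i B ∧ μmin ∈ W1i B ∧ μmax ≤ sSup (W1i B) ∧ sInf (W1i B) ≤ μmin := by
  have hμmax := prodSet_subset_W1i B hmax.1
  have hμmin := prodSet_subset_W1i B hmin.1
  exact ⟨hμmax, hμmin, le_csSup (isBounded_W1i B).bddAbove hμmax,
    csInf_le (isBounded_W1i B).bddBelow hμmin⟩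
end
end

section
/- Let Φ : M_m(ℝ) → M_n(ℝ) be transpose-preserving. If there exists p ∈ ℝ such that p C_Φ + (1-p) C_Φ^Γ is positive semidefinite, then Φ can be written as Φ(X) = Σⱼ Aⱼ X Aⱼᵀ + Ψ(X) where Ψ vanishes on all symmetric matrices; in particular Φ is positive. -/
open Matrix Complex

noncomputable section

/-- The Choi matrix of a linear map `Φ : M_m(ℝ) → M_n(ℝ)`. -/
def choi {m n : ℕ} (Φ : Matrix (Fin m) (Fin m) ℝ →ₗ[ℝ] Matrix (Fin n) (Fin n) ℝ) :
    Matrix (Fin m × Fin n) (Fin m × Fin n) ℝ :=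
  Matrix.of fun p q => Φ (Matrix.single p.1 q.1 1) p.2 q.2

/-! The map `Φ' = p Φ + (1 - p) (Φ ∘ T)` has Choi matrix `p C_Φ + (1 - p) C_Φ^Γ`, because `Φ`
preserves transposes. Factoring this PSD matrix as `Bᵀ B` and reshaping the rows of `B` into
`n × m` matrices gives a Kraus decomposition `Φ' X = ∑ⱼ Aⱼ X Aⱼᵀ`. Since `Φ'` agrees with `Φ` on
symmetric matrices, `Ψ = Φ - Φ'` vanishes there, and for PSD (hence symmetric) `X` the value
`Φ X = Φ' X` is a sum of congruences of `X`. -/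

open scoped MatrixOrder

lemma posSemidef_sum_mul_mul_transpose {ι κ μ : Type*} [Fintype κ] [Fintype μ]
    (s : Finset ι) (A : ι → Matrix κ μ ℝ) {X : Matrix μ μ ℝ} (hX : X.PosSemidef) :
    (∑ j ∈ s, A j * X * (A j)ᵀ).PosSemidef :=
  posSemidef_sum s fun j _ => by
    simpa only [conjTranspose_eq_transpose_of_trivial] using hX.mul_mul_conjTranspose_same (A j)

section Choi

variable {m n : ℕ}

lemma choi_add (Φ Ψ : Matrix (Fin m) (Fin m) ℝ →ₗ[ℝ] Matrix (Fin n) (Fin n) ℝ) :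
    choi (Φ + Ψ) = choi Φ + choi Ψ :=
  rfl

lemma choi_smul (c : ℝ) (Φ : Matrix (Fin m) (Fin m) ℝ →ₗ[ℝ] Matrix (Fin n) (Fin n) ℝ) :
    choi (c • Φ) = c • choi Φ :=
  rfl

lemma choi_comp_transpose {Φ : Matrix (Fin m) (Fin m) ℝ →ₗ[ℝ] Matrix (Fin n) (Fin n) ℝ}
    (hΦ : ∀ X, Φ Xᵀ = (Φ X)ᵀ) :
    choi (Φ ∘ₗ (transposeLinearEquiv (Fin m) (Fin m) ℝ ℝ).toLinearMap) = pt (choi Φ) := by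
  ext ⟨i, s⟩ ⟨k, t⟩
  change Φ (single i k 1)ᵀ s t = Φ (single i k 1) t s
  rw [hΦ, transpose_apply]

lemma apply_eq_sum_choi (Φ : Matrix (Fin m) (Fin m) ℝ →ₗ[ℝ] Matrix (Fin n) (Fin n) ℝ)
    (X : Matrix (Fin m) (Fin m) ℝ) (s t : Fin n) :
    Φ X s t = ∑ i, ∑ k, X i k * choi Φ (i, s) (k, t) := by
  have hX : ∀ i k, single i k (X i k) = X i k • single i k 1 := by simp [smul_single]
  conv_lhs => rw [matrix_eq_sum_single X]
  simp only [map_sum, hX, map_smul, Matrix.sum_apply, Matrix.smul_apply, smul_eq_mul, choi,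
    of_apply]

def krausOp (B : Matrix (Fin m × Fin n) (Fin m × Fin n) ℝ) (j : Fin m × Fin n) :
    Matrix (Fin n) (Fin m) ℝ :=
  of fun s i => B j (i, s)

lemma apply_eq_sum_krausOp {Φ : Matrix (Fin m) (Fin m) ℝ →ₗ[ℝ] Matrix (Fin n) (Fin n) ℝ}
    {B : Matrix (Fin m × Fin n) (Fin m × Fin n) ℝ} (hB : choi Φ = Bᵀ * B)
    (X : Matrix (Fin m) (Fin m) ℝ) :
    Φ X = ∑ j, krausOp B j * X * (krausOp B j)ᵀ := by
  ext s t
  simp only [apply_eq_sum_choi Φ X s t, hB, Matrix.sum_apply, mul_apply, transpose_apply, krausOp,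
    of_apply, Finset.mul_sum, Finset.sum_mul]
  refine (Finset.sum_congr rfl fun _ _ => Finset.sum_comm).trans <| Finset.sum_comm.trans <|
    Finset.sum_congr rfl fun _ _ => Finset.sum_comm.trans <|
      Finset.sum_congr rfl fun _ _ => Finset.sum_congr rfl fun _ _ => by ring

lemma exists_kraus_of_choi_posSemidef
    {Φ : Matrix (Fin m) (Fin m) ℝ →ₗ[ℝ] Matrix (Fin n) (Fin n) ℝ} (h : (choi Φ).PosSemidef) :
    ∃ (k : ℕ) (A : Fin k → Matrix (Fin n) (Fin m) ℝ), ∀ X, Φ X = ∑ j, A j * X * (A j)ᵀ := by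
  obtain ⟨B, hB⟩ := CStarAlgebra.nonneg_iff_eq_star_mul_self.mp h.nonneg
  rw [star_eq_conjTranspose, conjTranspose_eq_transpose_of_trivial] at hB
  refine ⟨m * n, fun j => krausOp B (finProdFinEquiv.symm j), fun X => ?_⟩
  rw [apply_eq_sum_krausOp hB]
  exact (Equiv.sum_comp finProdFinEquiv.symm fun j => krausOp B j * X * (krausOp B j)ᵀ).symm

end Choi

theorem stmt15 {m n : ℕ} (Φ : Matrix (Fin m) (Fin m) ℝ →ₗ[ℝ] Matrix (Fin n) (Fin n) ℝ)
    (hΦ : ∀ X, Φ Xᵀ = (Φ X)ᵀ) (p : ℝ)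
    (h : (p • choi Φ + (1 - p) • pt (choi Φ)).PosSemidef) :
    ∃ (k : ℕ) (A : Fin k → Matrix (Fin n) (Fin m) ℝ)
      (Ψ : Matrix (Fin m) (Fin m) ℝ →ₗ[ℝ] Matrix (Fin n) (Fin n) ℝ),
      (∀ X : Matrix (Fin m) (Fin m) ℝ, X.IsSymm → Ψ X = 0) ∧
      (∀ X : Matrix (Fin m) (Fin m) ℝ, Φ X = (∑ j, A j * X * (A j)ᵀ) + Ψ X) ∧
      (∀ X : Matrix (Fin m) (Fin m) ℝ, X.PosSemidef → (Φ X).PosSemidef) := by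
  set Φ' := p • Φ + (1 - p) • (Φ ∘ₗ (transposeLinearEquiv (Fin m) (Fin m) ℝ ℝ).toLinearMap)
  have hchoi : choi Φ' = p • choi Φ + (1 - p) • pt (choi Φ) := by
    rw [choi_add, choi_smul, choi_smul, choi_comp_transpose hΦ]
  obtain ⟨k, A, hA⟩ := exists_kraus_of_choi_posSemidef (hchoi ▸ h)
  have hsymm : ∀ X : Matrix (Fin m) (Fin m) ℝ, X.IsSymm → Φ' X = Φ X := fun X hX => by
    change p • Φ X + (1 - p) • Φ Xᵀ = Φ X
    rw [hX.eq]
    module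
  refine ⟨k, A, Φ - Φ', fun X hX => by rw [LinearMap.sub_apply, hsymm X hX, sub_self],
    fun X => by rw [LinearMap.sub_apply, ← hA, add_sub_cancel], fun X hX => ?_⟩
  rw [← hsymm X (isHermitian_iff_isSymm.mp hX.isHermitian), hA]
  exact posSemidef_sum_mul_mul_transpose _ A hX
end
end

section
/- Let B ∈ M_{n_1}(ℝ) ⊗ ⋯ ⊗ M_{n_p}(ℝ), and let S ⊆ {1,…,p}. For any product vector x = v_1 ⊗ ⋯ ⊗ v_p with real v_j, one has xᵀ Γ_S(B) x = xᵀ B x, where Γ_S transposes the tensor factors indexed by S. Consequently, for any nonempty family P = {S_1,…,S_k} of subsets of {1,…,p}, μ_max(B) ≤ W^{P,1}_max(B) and μ_min(B) ≥ W^{P,1}_min(B). -/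
open Matrix Complex

noncomputable section

/-- Partial transpose of the tensor factors indexed by `S`. -/
def ptS {p : ℕ} {n : Fin p → ℕ} (S : Finset (Fin p))
    (B : Matrix (∀ j, Fin (n j)) (∀ j, Fin (n j)) ℝ) :
    Matrix (∀ j, Fin (n j)) (∀ j, Fin (n j)) ℝ :=
  Matrix.of fun a b =>
    B (fun j => if j ∈ S then b j else a j) (fun j => if j ∈ S then a j else b j)

/-- The `p`-fold Kronecker product of vectors. -/
def mKron {p : ℕ} {n : Fin p → ℕ} (v : ∀ j, Fin (n j) → ℝ) : (∀ j, Fin (n j)) → ℝ :=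
  fun a => ∏ j, v j (a j)

/-- Values of the quadratic form of `B` on real unit product vectors. -/
def mProdSet {p : ℕ} {n : Fin p → ℕ}
    (B : Matrix (∀ j, Fin (n j)) (∀ j, Fin (n j)) ℝ) : Set ℝ :=
  {r | ∃ v : ∀ j, Fin (n j) → ℝ, (∀ j, v j ⬝ᵥ v j = 1) ∧
    r = mKron v ⬝ᵥ B.mulVec (mKron v)}

/-- `W^{P,1}(B)`: reals `c` with `(c,…,c)` in the joint numerical range of the `Γ_S(B)`, `S ∈ P`. -/
def WP1 {p : ℕ} {n : Fin p → ℕ}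
    (B : Matrix (∀ j, Fin (n j)) (∀ j, Fin (n j)) ℝ) (P : Finset (Finset (Fin p))) : Set ℝ :=
  {c | ∃ x : (∀ j, Fin (n j)) → ℂ, star x ⬝ᵥ x = 1 ∧
    ∀ S ∈ P, star x ⬝ᵥ ((ptS S B).map (fun t => (t : ℂ))).mulVec x = (c : ℂ)}

lemma dot_ofReal' {I : Type*} [Fintype I] (M : Matrix I I ℝ) (f : I → ℝ) :
    star (fun i => (f i : ℂ)) ⬝ᵥ (M.map (fun t => (t : ℂ))).mulVec (fun i => (f i : ℂ))
      = ((f ⬝ᵥ M.mulVec f : ℝ) : ℂ) := by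
  simp [dotProduct, mulVec, Matrix.map, Complex.conj_ofReal]

lemma dot_self_ofReal' {I : Type*} [Fintype I] (f : I → ℝ) :
    star (fun i => (f i : ℂ)) ⬝ᵥ (fun i => (f i : ℂ)) = ((f ⬝ᵥ f : ℝ) : ℂ) := by
  simp [dotProduct, Complex.conj_ofReal]

lemma mKron_dot' {p : ℕ} {n : Fin p → ℕ} (v w : ∀ j, Fin (n j) → ℝ) :
    mKron v ⬝ᵥ mKron w = ∏ j, v j ⬝ᵥ w j := by
  simp only [dotProduct, mKron, ← Finset.prod_mul_distrib]
  rw [Finset.prod_univ_sum]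
  rw [Fintype.piFinset_univ]

lemma abs_dot_le' {I : Type*} [Fintype I] (M : Matrix I I ℂ) (x : I → ℂ)
    (hx : ∀ i, ‖x i‖ ≤ 1) :
    ‖star x ⬝ᵥ M.mulVec x‖ ≤ ∑ i, ∑ j, ‖M i j‖ := by
  have h : star x ⬝ᵥ M.mulVec x = ∑ i, ∑ j, (starRingEnd ℂ) (x i) * (M i j * x j) := by
    simp [dotProduct, mulVec, Finset.mul_sum]
  rw [h]
  refine (norm_sum_le _ _).trans (Finset.sum_le_sum fun i _ => ?_)
  refine (norm_sum_le _ _).trans (Finset.sum_le_sum fun j _ => ?_)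
  rw [norm_mul, norm_mul, RCLike.norm_conj]
  calc ‖x i‖ * (‖M i j‖ * ‖x j‖) ≤ 1 * (‖M i j‖ * 1) := by
        gcongr <;> [exact hx i; exact hx j]
    _ = ‖M i j‖ := by ring

lemma ptS_quad' {p : ℕ} {n : Fin p → ℕ} (S : Finset (Fin p))
    (B : Matrix (∀ j, Fin (n j)) (∀ j, Fin (n j)) ℝ) (v : ∀ j, Fin (n j) → ℝ) :
    mKron v ⬝ᵥ (ptS S B).mulVec (mKron v) = mKron v ⬝ᵥ B.mulVec (mKron v) := by
  have conv1 : ∀ M : Matrix (∀ j, Fin (n j)) (∀ j, Fin (n j)) ℝ,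
      mKron v ⬝ᵥ M.mulVec (mKron v)
        = ∑ x : (∀ j, Fin (n j)) × (∀ j, Fin (n j)),
            mKron v x.1 * (M x.1 x.2 * mKron v x.2) := by
    intro M
    rw [Fintype.sum_prod_type]
    simp [dotProduct, mulVec, Finset.mul_sum]
  rw [conv1, conv1]
  set σ : ((∀ j, Fin (n j)) × (∀ j, Fin (n j))) → ((∀ j, Fin (n j)) × (∀ j, Fin (n j))) :=
    fun x => (fun j => if j ∈ S then x.2 j else x.1 j, fun j => if j ∈ S then x.1 j else x.2 j)
    with hσ
  have hinv : Function.Involutive σ := by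
    intro x
    simp only [hσ]
    refine Prod.ext (funext fun j => ?_) (funext fun j => ?_) <;> by_cases hj : j ∈ S <;> simp [hj]
  refine Fintype.sum_equiv hinv.toPerm _ _ fun x => ?_
  have hm : mKron v (σ x).1 * mKron v (σ x).2 = mKron v x.1 * mKron v x.2 := by
    simp only [mKron, ← Finset.prod_mul_distrib]
    refine Finset.prod_congr rfl fun j _ => ?_
    by_cases hj : j ∈ S <;> simp [hσ, hj, mul_comm]
  have hB : ptS S B x.1 x.2 = B (σ x).1 (σ x).2 := rfl
  have : Function.Involutive.toPerm σ hinv x = σ x := rfl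
  rw [this, hB]
  calc mKron v x.1 * (B (σ x).1 (σ x).2 * mKron v x.2)
      = (mKron v x.1 * mKron v x.2) * B (σ x).1 (σ x).2 := by ring
    _ = (mKron v (σ x).1 * mKron v (σ x).2) * B (σ x).1 (σ x).2 := by rw [hm]
    _ = mKron v (σ x).1 * (B (σ x).1 (σ x).2 * mKron v (σ x).2) := by ring

theorem stmt18 {p : ℕ} {n : Fin p → ℕ}
    (B : Matrix (∀ j, Fin (n j)) (∀ j, Fin (n j)) ℝ) :
    (∀ (S : Finset (Fin p)) (v : ∀ j, Fin (n j) → ℝ),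
      mKron v ⬝ᵥ (ptS S B).mulVec (mKron v) = mKron v ⬝ᵥ B.mulVec (mKron v)) ∧
    ∀ (P : Finset (Finset (Fin p))), P.Nonempty →
      ∀ μmax μmin : ℝ, IsGreatest (mProdSet B) μmax → IsLeast (mProdSet B) μmin →
        μmax ≤ sSup (WP1 B P) ∧ sInf (WP1 B P) ≤ μmin := by
  
  refine ⟨fun S v => ptS_quad' S B v, ?_⟩
  intro P hP μmax μmin hmax hmin
  obtain ⟨S₀, hS₀⟩ := hP
  set C : ℝ := ∑ a, ∑ b, |ptS S₀ B a b| with hC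
  have hbound : ∀ c ∈ WP1 B P, |c| ≤ C := by
    rintro c ⟨x, hx1, hx2⟩
    have hsq : ∑ i, ‖x i‖ ^ 2 = 1 := by
      have h1 : ((∑ i, ‖x i‖ ^ 2 : ℝ) : ℂ) = 1 := by
        rw [← hx1]
        push_cast
        refine Finset.sum_congr rfl fun i _ => ?_
        rw [Pi.star_apply, mul_comm, show star (x i) = (starRingEnd ℂ) (x i) from rfl, Complex.mul_conj]
        norm_cast
        simp [Complex.normSq_eq_norm_sq]
      exact_mod_cast h1
    have hxi : ∀ i, ‖x i‖ ≤ 1 := by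
      intro i
      have h2 : ‖x i‖ ^ 2 ≤ 1 := by
        rw [← hsq]
        exact Finset.single_le_sum (f := fun j => ‖x j‖ ^ 2) (fun j _ => sq_nonneg _) (Finset.mem_univ i)
      nlinarith [norm_nonneg (x i)]
    have hle := abs_dot_le' ((ptS S₀ B).map (fun t => (t : ℂ))) x hxi
    rw [hx2 S₀ hS₀] at hle
    rw [hC]
    simpa using hle
  have hbddA : BddAbove (WP1 B P) := ⟨C, fun c hc => (abs_le.mp (hbound c hc)).2⟩
  have hbddB : BddBelow (WP1 B P) := ⟨-C, fun c hc => (abs_le.mp (hbound c hc)).1⟩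
  have hmem : ∀ μ ∈ mProdSet B, μ ∈ WP1 B P := by
    rintro μ ⟨v, hv, hμ⟩
    refine ⟨fun i => (mKron v i : ℂ), ?_, ?_⟩
    · rw [dot_self_ofReal', mKron_dot']
      simp [hv]
    · intro S hS
      rw [dot_ofReal', ptS_quad', ← hμ]
  exact ⟨le_csSup hbddA (hmem μmax hmax.1), csInf_le hbddB (hmem μmin hmin.1)⟩
end
end
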